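/- arXiv:1308.5248 — 6 statements merged into one kernel-verified Lean document; each statement's English description precedes it below -/
import Mathlib

section
/- Let G be a finite abelian group, d ≥ 1, L ∈ ℝ₊^d, ω ∈ G^d, and H a subgroup of G. Then the system of dilates (M(ρL, ω, H))_{ρ>0} induced by the coset progression M(L, ω, H) is a Bourgain system of dimension at most 3d. -/
open Pointwise

universe u

/-- A Bourgain system of dimension `d` in an abelian group `G`. -/
def IsBourgainSystem {G : Type u} [AddCommGroup G] (B : ℝ → Set G) (d : ℝ) : Prop :=
  (∀ ρ : ℝ, 0 < ρ → (0 : G) ∈ B ρ) ∧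
  (∀ ρ : ℝ, 0 < ρ → -B ρ = B ρ) ∧
  (∀ ρ ρ' : ℝ, 0 < ρ → ρ ≤ ρ' → B ρ ⊆ B ρ') ∧
  (∀ ρ ρ' : ℝ, 0 < ρ → 0 < ρ' → B ρ + B ρ' ⊆ B (ρ + ρ')) ∧
  (∀ ρ : ℝ, 0 < ρ → ∃ X : Set G, (Nat.card X : ℝ) ≤ (2 : ℝ) ^ d ∧ B (2 * ρ) ⊆ X + B ρ)

/-- The coset progression `M(L, ω, H) = [−L₁, L₁]_ℤ·ω₁ + ⋯ + [−L_d, L_d]_ℤ·ω_d + H`. -/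
def cosetProg {G : Type u} [AddCommGroup G] {d : ℕ} (L : Fin d → ℝ) (ω : Fin d → G)
    (H : AddSubgroup G) : Set G :=
  {x | ∃ k : Fin d → ℤ, (∀ i, |(k i : ℝ)| ≤ L i) ∧ ∃ h ∈ H, x = (∑ i, k i • ω i) + h}

theorem statement5 {G : Type u} [AddCommGroup G] [Fintype G] (d : ℕ) (hd : 1 ≤ d)
    (L : Fin d → ℝ) (hL : ∀ i, 0 ≤ L i) (ω : Fin d → G) (H : AddSubgroup G) :
    IsBourgainSystem (fun ρ => cosetProg (fun i => ρ * L i) ω H) (3 * (d : ℝ)) := by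
  refine ⟨?_, ?_, ?_, ?_, ?_⟩
  · -- zero
    intro ρ hρ
    exact ⟨0, fun i => by simpa using mul_nonneg hρ.le (hL i),
      0, H.zero_mem, by simp⟩
  · -- symmetric
    intro ρ hρ
    ext x
    simp only [Set.mem_neg]
    constructor
    · rintro ⟨k, hk, h, hh, hx⟩
      refine ⟨-k, fun i => by simpa using hk i, -h, H.neg_mem hh, ?_⟩
      have : x = -((∑ i, k i • ω i) + h) := by rw [← hx]; simp
      rw [this]
      simp only [Pi.neg_apply, neg_zsmul, ← Finset.sum_neg_distrib, neg_add]
    · rintro ⟨k, hk, h, hh, hx⟩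
      refine ⟨-k, fun i => by simpa using hk i, -h, H.neg_mem hh, ?_⟩
      rw [hx]
      simp only [Pi.neg_apply, neg_zsmul, ← Finset.sum_neg_distrib, neg_add]
  · -- monotone
    intro ρ ρ' hρ hle
    rintro x ⟨k, hk, h, hh, hx⟩
    exact ⟨k, fun i => (hk i).trans (mul_le_mul_of_nonneg_right hle (hL i)), h, hh, hx⟩
  · -- additive
    intro ρ ρ' hρ hρ'
    rintro x ⟨a, ⟨k, hk, h, hh, ha⟩, b, ⟨k', hk', h', hh', hb⟩, rfl⟩
    refine ⟨k + k', fun i => ?_, h + h', H.add_mem hh hh', ?_⟩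
    · simp only [Pi.add_apply]
      push_cast
      calc |(k i : ℝ) + k' i| ≤ |(k i : ℝ)| + |(k' i : ℝ)| := abs_add_le _ _
        _ ≤ ρ * L i + ρ' * L i := add_le_add (hk i) (hk' i)
        _ = (ρ + ρ') * L i := by ring
    · rw [ha, hb]
      simp only [Pi.add_apply, add_zsmul, Finset.sum_add_distrib]
      abel
  · -- covering
    intro ρ hρ
    set n : Fin d → ℤ := fun i => ⌊ρ * L i⌋ with hn
    have hn0 : ∀ i, 0 ≤ n i := fun i => Int.floor_nonneg.mpr (mul_nonneg hρ.le (hL i))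
    refine ⟨Set.range (fun c : Fin d → Fin 3 => ∑ i, (((c i : ℤ) - 1) * (n i + 1)) • ω i),
      ?_, ?_⟩
    · calc (Nat.card (Set.range fun c : Fin d → Fin 3 =>
            ∑ i, (((c i : ℤ) - 1) * (n i + 1)) • ω i) : ℝ)
          ≤ (Nat.card (Fin d → Fin 3) : ℝ) := by
            exact_mod_cast Finite.card_range_le _
        _ = (3 : ℝ) ^ d := by simp [Nat.card_eq_fintype_card]
        _ ≤ (8 : ℝ) ^ d := by
            apply pow_le_pow_left₀ (by norm_num) (by norm_num)
        _ = (2 : ℝ) ^ (3 * (d : ℝ)) := by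
            rw [show (3 : ℝ) * (d : ℝ) = ((3 * d : ℕ) : ℝ) by push_cast; ring,
              Real.rpow_natCast, pow_mul]
            norm_num
    · rintro x ⟨k, hk, h, hh, hx⟩
      have hk' : ∀ i, |k i| ≤ 2 * n i + 1 := by
        intro i
        have h1 : |k i| ≤ ⌊2 * ρ * L i⌋ := Int.le_floor.mpr (by
          push_cast
          exact hk i)
        have h2 : ⌊2 * ρ * L i⌋ < 2 * n i + 2 := by
          rw [Int.floor_lt]
          push_cast
          have := Int.lt_floor_add_one (ρ * L i)
          rw [hn]
          nlinarith [Int.lt_floor_add_one (ρ * L i)]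
        omega
      set c : Fin d → Fin 3 := fun i =>
        if n i < k i then 2 else if k i < -n i then 0 else 1 with hc
      refine ⟨∑ i, (((c i : ℤ) - 1) * (n i + 1)) • ω i, ⟨c, rfl⟩,
        (∑ i, (k i - ((c i : ℤ) - 1) * (n i + 1)) • ω i) + h, ⟨fun i => k i - ((c i : ℤ) - 1) * (n i + 1), fun i => ?_, h, hh, rfl⟩, ?_⟩
      · have habs : |k i - ((c i : ℤ) - 1) * (n i + 1)| ≤ n i := by
          have hk2 := abs_le.mp (hk' i)
          have hn0i := hn0 i
          rw [abs_le]
          simp only [hc]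
          split_ifs with h1 h2 <;>
            [(show -n i ≤ k i - (((2 : Fin 3) : ℤ) - 1) * (n i + 1) ∧ _);
             (show -n i ≤ k i - (((0 : Fin 3) : ℤ) - 1) * (n i + 1) ∧ _);
             (show -n i ≤ k i - (((1 : Fin 3) : ℤ) - 1) * (n i + 1) ∧ _)] <;>
            norm_num <;> omega
        calc |((k i - ((c i : ℤ) - 1) * (n i + 1) : ℤ) : ℝ)| ≤ (n i : ℝ) := by
              exact_mod_cast habs
          _ ≤ ρ * L i := Int.floor_le _
      · show (∑ i, (((c i : ℤ) - 1) * (n i + 1)) • ω i) +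
            ((∑ i, (k i - ((c i : ℤ) - 1) * (n i + 1)) • ω i) + h) = x
        rw [hx, ← add_assoc, ← Finset.sum_add_distrib]
        congr 1
        apply Finset.sum_congr rfl
        intro i _
        rw [← add_zsmul]
        congr 1
        ring
end

section
/- Let G be a finite abelian group, λ ∈ (0, 1], and let 𝓑 be a Bourgain system in G of dimension d and density b. Then the dilated system 𝓑_λ = (B_{λρ})_{ρ>0} is a Bourgain system of dimension at most d and density at least (λ/2)^d · b. -/
open Pointwise

universe u

theorem statement6 {G : Type u} [AddCommGroup G] [Fintype G] (B : ℝ → Set G) (d : ℝ)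
    (hB : IsBourgainSystem B d) (lam : ℝ) (hlam0 : 0 < lam) (hlam1 : lam ≤ 1) :
    IsBourgainSystem (fun ρ => B (lam * ρ)) d ∧
      (lam / 2) ^ d * ((Nat.card (B 1) : ℝ) / (Fintype.card G : ℝ))
        ≤ (Nat.card (B lam) : ℝ) / (Fintype.card G : ℝ) := by
  obtain ⟨h0, hneg, hmono, hadd, hcov⟩ := hB
  -- d ≥ 0
  have hd0 : (0:ℝ) ≤ d := by
    obtain ⟨X, hX, hXcov⟩ := hcov 1 one_pos
    have h0mem : (0:G) ∈ X + B 1 := hXcov (h0 (2*1) (by norm_num))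
    have hXne : X.Nonempty := by
      rcases h0mem with ⟨x, hx, y, hy, _⟩
      exact ⟨x, hx⟩
    have h1X : (1:ℝ) ≤ Nat.card X := by
      have := Nat.one_le_iff_ne_zero.2 (Nat.card_ne_zero.2 ⟨hXne.to_subtype, Set.toFinite X⟩)
      exact_mod_cast this
    have h12 : (1:ℝ) ≤ (2:ℝ) ^ d := le_trans h1X hX
    by_contra hd
    push_neg at hd
    have := Real.rpow_lt_one_of_one_lt_of_neg (x := (2:ℝ)) one_lt_two hd
    linarith
  have h2d0 : (0:ℝ) < (2:ℝ) ^ d := Real.rpow_pos_of_pos two_pos d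
  -- covering cardinality step
  have hstep : ∀ ρ : ℝ, 0 < ρ →
      (Nat.card (B (2 * ρ)) : ℝ) ≤ (2:ℝ) ^ d * Nat.card (B ρ) := by
    intro ρ hρ
    obtain ⟨X, hX, hXcov⟩ := hcov ρ hρ
    have h1 : (Nat.card (B (2*ρ)) : ℝ) ≤ (Nat.card (X + B ρ) : ℝ) := by
      exact_mod_cast Nat.card_mono (Set.toFinite _) hXcov
    have h2 : (Nat.card (X + B ρ) : ℝ) ≤ (Nat.card X : ℝ) * Nat.card (B ρ) := by
      exact_mod_cast Set.natCard_add_le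
    calc (Nat.card (B (2*ρ)) : ℝ) ≤ (Nat.card X : ℝ) * Nat.card (B ρ) := h1.trans h2
      _ ≤ (2:ℝ) ^ d * Nat.card (B ρ) := by
        apply mul_le_mul_of_nonneg_right hX (by positivity)
  -- iterate
  have hiter : ∀ n : ℕ, (Nat.card (B 1) : ℝ) ≤ ((2:ℝ) ^ d) ^ n * Nat.card (B ((2:ℝ)⁻¹ ^ n)) := by
    intro n
    induction n with
    | zero => simp
    | succ n ih =>
      have hpos : (0:ℝ) < (2:ℝ)⁻¹ ^ (n+1) := by positivity
      have heq : (2:ℝ)⁻¹ ^ n = 2 * (2:ℝ)⁻¹ ^ (n+1) := by ring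
      have := hstep ((2:ℝ)⁻¹ ^ (n+1)) hpos
      rw [← heq] at this
      calc (Nat.card (B 1) : ℝ) ≤ ((2:ℝ) ^ d) ^ n * Nat.card (B ((2:ℝ)⁻¹ ^ n)) := ih
        _ ≤ ((2:ℝ) ^ d) ^ n * ((2:ℝ) ^ d * Nat.card (B ((2:ℝ)⁻¹ ^ (n+1)))) := by
            apply mul_le_mul_of_nonneg_left this (by positivity)
        _ = ((2:ℝ) ^ d) ^ (n+1) * Nat.card (B ((2:ℝ)⁻¹ ^ (n+1))) := by ring
  -- choose n minimal with 1/lam ≤ 2^n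
  have hex : ∃ n : ℕ, lam⁻¹ ≤ (2:ℝ) ^ n := by
    obtain ⟨n, hn⟩ := pow_unbounded_of_one_lt lam⁻¹ (one_lt_two (α := ℝ))
    exact ⟨n, hn.le⟩
  classical
  obtain ⟨n, hn1, hmin⟩ : ∃ n : ℕ, lam⁻¹ ≤ (2:ℝ) ^ n ∧ ∀ m < n, ¬ lam⁻¹ ≤ (2:ℝ) ^ m :=
    ⟨Nat.find hex, Nat.find_spec hex, fun m hm => Nat.find_min hex hm⟩
  have hn2 : (2:ℝ) ^ n ≤ 2 / lam := by
    rcases Nat.eq_zero_or_pos n with h | h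
    · rw [h, pow_zero]
      rw [le_div_iff₀ hlam0, one_mul]
      linarith
    · obtain ⟨m, rfl⟩ := Nat.exists_eq_succ_of_ne_zero h.ne'
      have hm := hmin m (Nat.lt_succ_self m)
      push_neg at hm
      rw [pow_succ, mul_comm, div_eq_mul_inv]
      nlinarith
  -- B(2⁻¹^n) ⊆ B lam
  have hsub : ((2:ℝ)⁻¹) ^ n ≤ lam := by
    rw [inv_pow, inv_le_comm₀ (by positivity) hlam0]
    exact hn1
  have hmonoc : (Nat.card (B ((2:ℝ)⁻¹ ^ n)) : ℝ) ≤ Nat.card (B lam) := by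
    exact_mod_cast Nat.card_mono (Set.toFinite _) (hmono _ _ (by positivity) hsub)
  -- (2^d)^n ≤ (2/lam)^d
  have hpow : ((2:ℝ) ^ d) ^ n ≤ (2 / lam) ^ d := by
    have h1 : ((2:ℝ) ^ d) ^ n = ((2:ℝ) ^ (n:ℕ)) ^ d := by
      rw [← Real.rpow_natCast ((2:ℝ) ^ d) n, ← Real.rpow_natCast (2:ℝ) n,
        ← Real.rpow_mul (by norm_num), ← Real.rpow_mul (by norm_num), mul_comm]
    rw [h1]
    exact Real.rpow_le_rpow (by positivity) hn2 hd0
  -- main card inequality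
  have hmain : (Nat.card (B 1) : ℝ) ≤ (2 / lam) ^ d * Nat.card (B lam) := by
    calc (Nat.card (B 1) : ℝ) ≤ ((2:ℝ) ^ d) ^ n * Nat.card (B ((2:ℝ)⁻¹ ^ n)) := hiter n
      _ ≤ (2 / lam) ^ d * Nat.card (B lam) := by
          apply mul_le_mul hpow hmonoc (by positivity) (by positivity)
  have hkey : (lam / 2) ^ d * (Nat.card (B 1) : ℝ) ≤ Nat.card (B lam) := by
    have hld : (0:ℝ) < (lam / 2) ^ d := Real.rpow_pos_of_pos (by positivity) d
    have hmul : (lam / 2) ^ d * (2 / lam) ^ d = 1 := by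
      rw [← Real.mul_rpow (by positivity) (by positivity)]
      rw [show (lam / 2) * (2 / lam) = 1 by field_simp]
      exact Real.one_rpow d
    calc (lam / 2) ^ d * (Nat.card (B 1) : ℝ)
        ≤ (lam / 2) ^ d * ((2 / lam) ^ d * Nat.card (B lam)) :=
          mul_le_mul_of_nonneg_left hmain hld.le
      _ = Nat.card (B lam) := by rw [← mul_assoc, hmul, one_mul]
  constructor
  · refine ⟨?_, ?_, ?_, ?_, ?_⟩
    · intro ρ hρ; exact h0 _ (by positivity)
    · intro ρ hρ; exact hneg _ (by positivity)
    · intro ρ ρ' hρ hle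
      exact hmono _ _ (by positivity) (by nlinarith)
    · intro ρ ρ' hρ hρ'
      have := hadd (lam * ρ) (lam * ρ') (by positivity) (by positivity)
      rw [show lam * ρ + lam * ρ' = lam * (ρ + ρ') by ring] at this
      exact this
    · intro ρ hρ
      obtain ⟨X, hX, hXcov⟩ := hcov (lam * ρ) (by positivity)
      refine ⟨X, hX, ?_⟩
      show B (lam * (2 * ρ)) ⊆ X + B (lam * ρ)
      rw [show lam * (2 * ρ) = 2 * (lam * ρ) by ring]
      exact hXcov
  · rw [← mul_div_assoc]
    gcongr
end

section
/- Let G be a finite abelian group and let 𝓑⁽¹⁾, …, 𝓑⁽ᵏ⁾ be Bourgain systems in G of dimensions d₁, …, d_k and densities b₁, …, b_k. Then the intersection system 𝓑⁽¹⁾ ∧ ⋯ ∧ 𝓑⁽ᵏ⁾ = (B_ρ⁽¹⁾ ∩ ⋯ ∩ B_ρ⁽ᵏ⁾)_{ρ>0} is a Bourgain system of dimension at most 2(d₁ + ⋯ + d_k) and of density at least 4^{−(d₁ + ⋯ + d_k)} · b₁ ⋯ b_k. -/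
open Pointwise

universe u

/-!
Covering: each `B i (2ρ)` is covered by `4 ^ d i` translates of `B i (ρ/2)`. Picking one point of
`⋂ i, B i (2ρ)` in every nonempty cell of the common refinement of these coverings gives at most
`4 ^ ∑ d i` points, and since two points of a cell differ by an element of
`⋂ i, (B i (ρ/2) - B i (ρ/2)) ⊆ ⋂ i, B i ρ`, their translates of `⋂ i, B i ρ` cover
`⋂ i, B i (2ρ)`.

Density: averaging over translations, some intersection `⋂ i, (x i + B i (1/2))` has at least
`|G| * ∏ |B i (1/2)| / |G| ^ k` elements; its difference set lies in `⋂ i, B i 1`, and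
`|B i 1| ≤ 2 ^ d i * |B i (1/2)|` by the covering property.
-/

namespace Set
variable {G : Type u} [AddCommGroup G]

lemma sum_natCard_inter_vadd [Fintype G] (A S : Set G) :
    ∑ y : G, Nat.card ↥(A ∩ (y +ᵥ S)) = Nat.card A * Nat.card S := by
  rw [← Nat.card_sigma, ← Nat.card_prod]
  refine Nat.card_congr
    { toFun := fun p =>
        (⟨p.2, p.2.2.1⟩, ⟨-p.1 + p.2, mem_vadd_set_iff_neg_vadd_mem.1 p.2.2.2⟩)
      invFun := fun p => ⟨p.1 - p.2, p.1, p.1.2, mem_vadd_set_iff_neg_vadd_mem.2 (by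
        simpa only [vadd_eq_add, neg_sub, sub_add_cancel] using p.2.2)⟩
      left_inv := fun p => by ext <;> simp
      right_inv := fun p => by ext <;> simp }

lemma exists_natCard_mul_natCard_le_natCard_inter_vadd [Fintype G] (A S : Set G) :
    ∃ y : G, Nat.card A * Nat.card S ≤ Nat.card G * Nat.card ↥(A ∩ (y +ᵥ S)) := by
  have hsum : ∑ _y : G, Nat.card A * Nat.card S
      ≤ ∑ y : G, Nat.card G * Nat.card ↥(A ∩ (y +ᵥ S)) := by
    rw [← Finset.mul_sum (a := Nat.card G), sum_natCard_inter_vadd, Finset.sum_const,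
      Finset.card_univ, ← Nat.card_eq_fintype_card, smul_eq_mul]
  obtain ⟨y, -, hy⟩ := Finset.exists_le_of_sum_le Finset.univ_nonempty hsum
  exact ⟨y, hy⟩

lemma exists_natCard_mul_prod_le_pow_mul_natCard_biInter_vadd [Fintype G] {ι : Type*}
    (S : ι → Set G) (s : Finset ι) :
    ∃ x : ι → G, Nat.card G * ∏ i ∈ s, Nat.card (S i)
      ≤ Nat.card G ^ s.card * Nat.card ↥(⋂ i ∈ s, x i +ᵥ S i) := by
  classical
  induction s using Finset.induction_on with
  | empty => exact ⟨0, by simp⟩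
  | insert j s hj ih =>
    obtain ⟨x, hx⟩ := ih
    obtain ⟨y, hy⟩ :=
      exists_natCard_mul_natCard_le_natCard_inter_vadd (⋂ i ∈ s, x i +ᵥ S i) (S j)
    have hupdate : ⋂ i ∈ insert j s, Function.update x j y i +ᵥ S i
        = (⋂ i ∈ s, x i +ᵥ S i) ∩ (y +ᵥ S j) := by
      rw [Finset.set_biInter_insert, Function.update_self, inter_comm]
      congr 1
      refine iInter₂_congr fun i hi => ?_
      rw [Function.update_of_ne (ne_of_mem_of_not_mem hi hj)]
    refine ⟨Function.update x j y, ?_⟩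
    rw [hupdate, Finset.prod_insert hj, Finset.card_insert_of_notMem hj, pow_succ]
    calc Nat.card G * (Nat.card (S j) * ∏ i ∈ s, Nat.card (S i))
        = (Nat.card G * ∏ i ∈ s, Nat.card (S i)) * Nat.card (S j) := by ring
      _ ≤ Nat.card G ^ s.card * Nat.card ↥(⋂ i ∈ s, x i +ᵥ S i) * Nat.card (S j) := by
        gcongr
      _ ≤ Nat.card G ^ s.card *
          (Nat.card G * Nat.card ↥((⋂ i ∈ s, x i +ᵥ S i) ∩ (y +ᵥ S j))) := by
        rw [mul_assoc]; gcongr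
      _ = _ := by ring

lemma natCard_iInter_vadd_le_natCard_iInter_sub [Finite G] {ι : Type*} (x : ι → G)
    (S : ι → Set G) :
    Nat.card ↥(⋂ i, x i +ᵥ S i) ≤ Nat.card ↥(⋂ i, (S i - S i)) := by
  obtain hempty | ⟨a, ha⟩ := (⋂ i, x i +ᵥ S i).eq_empty_or_nonempty
  · simp [hempty]
  rw [← natCard_vadd_set (-a)]
  refine Nat.card_mono (toFinite _) ?_
  rintro _ ⟨z, hz, rfl⟩
  refine mem_iInter.2 fun i => ?_
  obtain ⟨s, hs, rfl⟩ := mem_iInter.1 hz i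
  obtain ⟨t, ht, rfl⟩ := mem_iInter.1 ha i
  exact ⟨s, hs, t, ht, by simp only [vadd_eq_add]; abel⟩

theorem natCard_mul_prod_le_pow_mul_natCard_iInter_sub [Fintype G] {ι : Type*} [Fintype ι]
    (S : ι → Set G) :
    Nat.card G * ∏ i, Nat.card (S i)
      ≤ Nat.card G ^ Fintype.card ι * Nat.card ↥(⋂ i, (S i - S i)) := by
  obtain ⟨x, hx⟩ := exists_natCard_mul_prod_le_pow_mul_natCard_biInter_vadd S Finset.univ
  simp only [Finset.mem_univ, iInter_true] at hx
  exact hx.trans (Nat.mul_le_mul_left _ (natCard_iInter_vadd_le_natCard_iInter_sub x S))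

lemma exists_natCard_le_prod_and_subset_add_iInter_sub [Finite G] {ι : Type*} [Fintype ι]
    {A : Set G} {W C : ι → Set G} (h : ∀ i, A ⊆ W i + C i) :
    ∃ Z : Set G, Nat.card Z ≤ ∏ i, Nat.card (W i) ∧ A ⊆ Z + ⋂ i, (C i - C i) := by
  classical
  let F : (∀ i, W i) → Set G := fun w => {a ∈ A | ∀ i, a - w i ∈ C i}
  -- the value `0` on empty cells is junk; it only keeps `rep` total, within the count bound
  let rep : (∀ i, W i) → G := fun w => if hw : (F w).Nonempty then hw.some else 0
  refine ⟨range rep, (Finite.card_range_le rep).trans Nat.card_pi.le, fun a ha => ?_⟩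
  have hcover : ∀ i, ∃ w : W i, a - w ∈ C i := fun i => by
    obtain ⟨w, hw, c, hc, rfl⟩ := h i ha
    exact ⟨⟨w, hw⟩, by simpa using hc⟩
  choose w hw using hcover
  have hne : (F w).Nonempty := ⟨a, ha, hw⟩
  have hrep : rep w ∈ F w := by simpa [rep, hne] using hne.some_mem
  refine ⟨rep w, mem_range_self w, a - rep w, mem_iInter.2 fun i => ?_, add_sub_cancel _ _⟩
  exact ⟨a - w i, hw i, rep w - w i, hrep.2 i, sub_sub_sub_cancel_right _ _ _⟩

end Set

namespace IsBourgainSystem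

variable {G : Type u} [AddCommGroup G] {B : ℝ → Set G} {d ρ ρ' : ℝ}

lemma sub_subset (h : IsBourgainSystem B d) (hρ : 0 < ρ) (hρ' : 0 < ρ') :
    B ρ - B ρ' ⊆ B (ρ + ρ') := by
  rw [sub_eq_add_neg, h.2.1 ρ' hρ']
  exact h.2.2.2.1 ρ ρ' hρ hρ'

lemma dim_nonneg [Finite G] (h : IsBourgainSystem B d) : 0 ≤ d := by
  obtain ⟨X, hX, hcover⟩ := h.2.2.2.2 1 one_pos
  obtain ⟨x, hx, -⟩ := hcover (h.1 (2 * 1) (by norm_num))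
  have hX1 : (1 : ℝ) ≤ 2 ^ d :=
    le_trans (by exact_mod_cast (Set.natCard_pos (Set.toFinite X)).2 ⟨x, hx⟩) hX
  by_contra! hd
  exact (Real.rpow_lt_one_of_one_lt_of_neg one_lt_two hd).not_ge hX1

lemma exists_cover_half (h : IsBourgainSystem B d) (hρ : 0 < ρ) :
    ∃ W : Set G, (Nat.card W : ℝ) ≤ 2 ^ (2 * d) ∧ B (2 * ρ) ⊆ W + B (ρ / 2) := by
  obtain ⟨X, hX, hXcover⟩ := h.2.2.2.2 ρ hρ
  obtain ⟨Y, hY, hYcover⟩ := h.2.2.2.2 (ρ / 2) (half_pos hρ)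
  rw [mul_div_cancel₀ ρ two_ne_zero] at hYcover
  refine ⟨X + Y, ?_, ?_⟩
  · calc (Nat.card ↥(X + Y) : ℝ) ≤ Nat.card X * Nat.card Y := by
          exact_mod_cast Set.natCard_add_le
      _ ≤ 2 ^ d * 2 ^ d := by gcongr
      _ = 2 ^ (2 * d) := by rw [two_mul, Real.rpow_add two_pos]
  · calc B (2 * ρ) ⊆ X + B ρ := hXcover
      _ ⊆ X + (Y + B (ρ / 2)) := Set.add_subset_add_left hYcover
      _ = X + Y + B (ρ / 2) := (add_assoc _ _ _).symm

lemma natCard_two_mul_le [Finite G] (h : IsBourgainSystem B d) (hρ : 0 < ρ) :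
    (Nat.card (B (2 * ρ)) : ℝ) ≤ 2 ^ d * Nat.card (B ρ) := by
  obtain ⟨X, hX, hcover⟩ := h.2.2.2.2 ρ hρ
  calc (Nat.card (B (2 * ρ)) : ℝ) ≤ Nat.card ↥(X + B ρ) := by
        exact_mod_cast Nat.card_mono (Set.toFinite _) hcover
    _ ≤ Nat.card X * Nat.card (B ρ) := by exact_mod_cast Set.natCard_add_le
    _ ≤ 2 ^ d * Nat.card (B ρ) := by gcongr

variable {ι : Type*} [Fintype ι] {B : ι → ℝ → Set G} {d : ι → ℝ}

theorem iInter [Finite G] (hB : ∀ i, IsBourgainSystem (B i) (d i)) :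
    IsBourgainSystem (fun ρ => ⋂ i, B i ρ) (2 * ∑ i, d i) := by
  refine ⟨fun ρ hρ => Set.mem_iInter.2 fun i => (hB i).1 ρ hρ,
    fun ρ hρ => by rw [Set.iInter_neg]; exact Set.iInter_congr fun i => (hB i).2.1 ρ hρ,
    fun ρ ρ' hρ hρρ' => Set.iInter_mono fun i => (hB i).2.2.1 ρ ρ' hρ hρρ',
    fun ρ ρ' hρ hρ' => ?_, fun ρ hρ => ?_⟩
  · exact Set.subset_iInter fun i => (Set.add_subset_add (Set.iInter_subset _ i)
      (Set.iInter_subset _ i)).trans ((hB i).2.2.2.1 ρ ρ' hρ hρ')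
  · choose W hWcard hWcover using fun i => (hB i).exists_cover_half hρ
    obtain ⟨Z, hZcard, hZcover⟩ := Set.exists_natCard_le_prod_and_subset_add_iInter_sub
      (A := ⋂ i, B i (2 * ρ)) fun i => (Set.iInter_subset _ i).trans (hWcover i)
    refine ⟨Z, ?_, hZcover.trans (Set.add_subset_add_left (Set.iInter_mono fun i => ?_))⟩
    · calc (Nat.card Z : ℝ) ≤ ∏ i, (Nat.card (W i) : ℝ) := by exact_mod_cast hZcard
        _ ≤ ∏ i, (2 : ℝ) ^ (2 * d i) :=
          Finset.prod_le_prod (fun i _ => by positivity) fun i _ => hWcard i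
        _ = 2 ^ (2 * ∑ i, d i) := by rw [Finset.mul_sum, Real.rpow_sum_of_pos two_pos]
    · simpa only [add_halves] using (hB i).sub_subset (half_pos hρ) (half_pos hρ)

theorem natCard_mul_prod_le [Finite G] (hB : ∀ i, IsBourgainSystem (B i) (d i)) :
    (Nat.card G : ℝ) * ∏ i, (Nat.card (B i 1) : ℝ)
      ≤ 2 ^ (∑ i, d i) * Nat.card G ^ Fintype.card ι * Nat.card ↥(⋂ i, B i 1) := by
  have := Fintype.ofFinite G
  have hhalf : 0 < (1 / 2 : ℝ) := by norm_num
  have hsub : ⋂ i, (B i (1 / 2) - B i (1 / 2)) ⊆ ⋂ i, B i 1 := Set.iInter_mono fun i => by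
    simpa only [add_halves] using (hB i).sub_subset hhalf hhalf
  have hcount : (Nat.card G : ℝ) * ∏ i, (Nat.card (B i (1 / 2)) : ℝ)
      ≤ Nat.card G ^ Fintype.card ι * Nat.card ↥(⋂ i, B i 1) := by
    exact_mod_cast (Set.natCard_mul_prod_le_pow_mul_natCard_iInter_sub fun i => B i (1 / 2)).trans
      (Nat.mul_le_mul_left _ (Nat.card_mono (Set.toFinite _) hsub))
  calc (Nat.card G : ℝ) * ∏ i, (Nat.card (B i 1) : ℝ)
      ≤ Nat.card G * ∏ i, (2 ^ d i * Nat.card (B i (1 / 2)) : ℝ) := by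
        gcongr with i
        have := (hB i).natCard_two_mul_le hhalf
        rwa [mul_one_div_cancel two_ne_zero] at this
    _ = 2 ^ (∑ i, d i) * (Nat.card G * ∏ i, (Nat.card (B i (1 / 2)) : ℝ)) := by
        rw [Finset.prod_mul_distrib, Real.rpow_sum_of_pos two_pos]; ring
    _ ≤ 2 ^ (∑ i, d i) * (Nat.card G ^ Fintype.card ι * Nat.card ↥(⋂ i, B i 1)) := by
        gcongr
    _ = _ := by ring

end IsBourgainSystem

theorem statement7_general {G : Type u} [AddCommGroup G] [Fintype G] (k : ℕ)
    (B : Fin k → ℝ → Set G) (d : Fin k → ℝ)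
    (hB : ∀ i, IsBourgainSystem (B i) (d i)) :
    IsBourgainSystem (fun ρ => ⋂ i, B i ρ) (2 * ∑ i, d i) ∧
      (4 : ℝ) ^ (-∑ i, d i) * ∏ i, ((Nat.card (B i 1) : ℝ) / (Fintype.card G : ℝ))
        ≤ (Nat.card (⋂ i, B i 1) : ℝ) / (Fintype.card G : ℝ) := by
  refine ⟨IsBourgainSystem.iInter hB, ?_⟩
  set D := ∑ i, d i
  have hD : 0 ≤ D := Finset.sum_nonneg fun i _ => (hB i).dim_nonneg
  have hG : (0 : ℝ) < Fintype.card G := by exact_mod_cast Fintype.card_pos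
  have hcount := IsBourgainSystem.natCard_mul_prod_le hB
  rw [Nat.card_eq_fintype_card, Fintype.card_fin] at hcount
  have h4 : (4 : ℝ) ^ (-D) * 2 ^ D ≤ 1 := calc
    (4 : ℝ) ^ (-D) * 2 ^ D ≤ 2 ^ (-D) * 2 ^ D := by
      gcongr ?_ * _
      exact Real.rpow_le_rpow_of_nonpos two_pos (by norm_num) (neg_nonpos.2 hD)
    _ = 1 := by rw [Real.rpow_neg zero_le_two, inv_mul_cancel₀ (by positivity)]
  rw [Finset.prod_div_distrib, Finset.prod_const, Finset.card_univ, Fintype.card_fin,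
    ← mul_div_assoc, div_le_div_iff₀ (by positivity) hG]
  calc (4 : ℝ) ^ (-D) * (∏ i, (Nat.card (B i 1) : ℝ)) * Fintype.card G
      = 4 ^ (-D) * (Fintype.card G * ∏ i, (Nat.card (B i 1) : ℝ)) := by ring
    _ ≤ 4 ^ (-D) * (2 ^ D * Fintype.card G ^ k * Nat.card ↥(⋂ i, B i 1)) := by gcongr
    _ = (4 ^ (-D) * 2 ^ D) * (Nat.card ↥(⋂ i, B i 1) * Fintype.card G ^ k) := by ring
    _ ≤ Nat.card ↥(⋂ i, B i 1) * Fintype.card G ^ k :=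
        mul_le_of_le_one_left (by positivity) h4

theorem statement7 {G : Type u} [AddCommGroup G] [Fintype G] (k : ℕ) (hk : 1 ≤ k)
    (B : Fin k → ℝ → Set G) (d : Fin k → ℝ)
    (hB : ∀ i, IsBourgainSystem (B i) (d i)) :
    IsBourgainSystem (fun ρ => ⋂ i, B i ρ) (2 * ∑ i, d i) ∧
      (4 : ℝ) ^ (-∑ i, d i) * ∏ i, ((Nat.card (B i 1) : ℝ) / (Fintype.card G : ℝ))
        ≤ (Nat.card (⋂ i, B i 1) : ℝ) / (Fintype.card G : ℝ) :=
  statement7_general k B d hB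
end

section
/- Set C₁ = 2⁶. Let G be a finite abelian group, let 𝓑 be a regular Bourgain system in G of dimension d, and let μ : G → ℝ≥0 satisfy E_G μ = 1 and have support contained in B_ρ, where 0 < ρ ≤ 1/(C₁ d). Then ‖μ_B ∗ μ − μ_B‖_{L¹} ≤ C₁ ρ d. -/
/-! For `y ∈ B_ρ` we have `B_1 ± y ⊆ B_{1+ρ}`, so the translate of `μ_B` by `y` differs from `μ_B`
only on `B_{1+ρ} \ B_1` and on its translate; hence `‖μ_B(· - y) - μ_B‖_{L¹} ≤ 2(|B_{1+ρ}|/|B| - 1)`,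
which regularity bounds by `64ρd`. As `E_G μ = 1`, `μ_B ∗ μ - μ_B` is the `μ`-weighted average of
these differences, and the triangle inequality for averages concludes. -/

open Pointwise

universe u

/-- Regularity of a Bourgain system, with `C₀ = 2⁵ = 32`. -/
def IsRegularBS {G : Type u} [AddCommGroup G] (B : ℝ → Set G) (d : ℝ) : Prop :=
  ∀ ρ : ℝ, |ρ| ≤ 1 / (32 * d) →
    1 - 32 * |ρ| * d ≤ (Nat.card (B (1 + ρ)) : ℝ) / (Nat.card (B 1) : ℝ) ∧
      (Nat.card (B (1 + ρ)) : ℝ) / (Nat.card (B 1) : ℝ) ≤ 1 + 32 * |ρ| * d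

/-- The average `E_G f = |G|⁻¹ Σ_x f x`. -/
noncomputable def gavg {G : Type u} [AddCommGroup G] [Fintype G] (f : G → ℝ) : ℝ :=
  (Fintype.card G : ℝ)⁻¹ * ∑ x, f x

/-- Normalized convolution `(f ∗ g)(x) = E_y f(y) g(x − y)`. -/
noncomputable def conv {G : Type u} [AddCommGroup G] [Fintype G] (f g : G → ℝ) : G → ℝ :=
  fun x => (Fintype.card G : ℝ)⁻¹ * ∑ y, f y * g (x - y)

/-- The normalized measure `μ_A = (|G|/|A|)·1_A` of a subset `A ⊆ G`. -/
noncomputable def muFn {G : Type u} [AddCommGroup G] [Fintype G] (A : Set G) : G → ℝ :=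
  A.indicator fun _ => (Fintype.card G : ℝ) / (Nat.card A : ℝ)

/-- The `L¹` norm `‖f‖_{L¹} = E_G |f|`. -/
noncomputable def L1Norm {G : Type u} [AddCommGroup G] [Fintype G] (f : G → ℝ) : ℝ :=
  gavg fun x => |f x|

section Average

variable {G : Type u} [AddCommGroup G] [Fintype G]

lemma gavg_mono {f g : G → ℝ} (h : ∀ x, f x ≤ g x) : gavg f ≤ gavg g :=
  mul_le_mul_of_nonneg_left (Finset.sum_le_sum fun x _ => h x) (by positivity)

lemma abs_gavg_le (f : G → ℝ) : |gavg f| ≤ gavg fun x => |f x| := by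
  rw [gavg, gavg, abs_mul, abs_of_nonneg (by positivity)]
  exact mul_le_mul_of_nonneg_left (Finset.abs_sum_le_sum_abs _ _) (by positivity)

lemma gavg_mul_const (f : G → ℝ) (c : ℝ) : gavg (fun x => f x * c) = gavg f * c := by
  rw [gavg, gavg, ← Finset.sum_mul, mul_assoc]

lemma gavg_const_mul (c : ℝ) (f : G → ℝ) : gavg (fun x => c * f x) = c * gavg f := by
  rw [gavg, gavg, ← Finset.mul_sum, mul_left_comm]

lemma gavg_sub (f g : G → ℝ) : gavg (fun x => f x - g x) = gavg f - gavg g := by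
  rw [gavg, gavg, gavg, Finset.sum_sub_distrib, mul_sub]

lemma gavg_comm (F : G → G → ℝ) :
    (gavg fun x => gavg fun y => F x y) = gavg fun y => gavg fun x => F x y := by
  simp only [gavg, ← Finset.mul_sum]
  rw [Finset.sum_comm]

lemma conv_apply_eq_gavg_mul_sub (f g : G → ℝ) (x : G) :
    conv f g x = gavg fun y => g y * f (x - y) :=
  congrArg _ <| Fintype.sum_equiv (Equiv.subLeft x) _ _ fun y => by simp [mul_comm]

lemma L1Norm_conv_sub_le {f μ : G → ℝ} (hμ0 : ∀ y, 0 ≤ μ y) (hμ1 : gavg μ = 1) {K : ℝ}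
    (hK : ∀ y, μ y ≠ 0 → L1Norm (fun x => f (x - y) - f x) ≤ K) :
    L1Norm (fun x => conv f μ x - f x) ≤ K := by
  have hdiff : ∀ x, conv f μ x - f x = gavg fun y => μ y * (f (x - y) - f x) := by
    intro x
    calc conv f μ x - f x = (gavg fun y => μ y * f (x - y)) - gavg fun y => μ y * f x := by
          rw [conv_apply_eq_gavg_mul_sub, gavg_mul_const, hμ1, one_mul]
      _ = gavg fun y => μ y * (f (x - y) - f x) := by simp only [← gavg_sub, mul_sub]
  calc L1Norm (fun x => conv f μ x - f x)
      = gavg fun x => |gavg fun y => μ y * (f (x - y) - f x)| := by simp only [L1Norm, hdiff]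
    _ ≤ gavg fun x => gavg fun y => μ y * |f (x - y) - f x| :=
        gavg_mono fun x => (abs_gavg_le _).trans_eq <| by simp_rw [abs_mul, abs_of_nonneg (hμ0 _)]
    _ = gavg fun y => μ y * L1Norm (fun x => f (x - y) - f x) := by
        rw [gavg_comm]; simp_rw [L1Norm, gavg_const_mul]
    _ ≤ gavg fun y => μ y * K := gavg_mono fun y => by
        rcases eq_or_ne (μ y) 0 with h | h
        · simp [h]
        · exact mul_le_mul_of_nonneg_left (hK y h) (hμ0 y)
    _ = K := by rw [gavg_mul_const, hμ1, one_mul]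

end Average

lemma sum_indicator_const {α : Type*} [Fintype α] (s : Set α) (c : ℝ) :
    ∑ x, s.indicator (fun _ => c) x = Nat.card s * c := by
  classical
  have h : Finset.univ.filter (· ∈ s) = s.toFinite.toFinset := by
    ext a; simp
  rw [Finset.sum_indicator_eq_sum_filter, Finset.sum_const, h,
    Nat.card_eq_card_finite_toFinset s.toFinite, nsmul_eq_mul]

section Translate

variable {G : Type u} [AddCommGroup G] {A A' : Set G} {y : G}

lemma abs_indicator_translate_sub_le {c : ℝ} (hc : 0 ≤ c) (hA_add : ∀ x ∈ A, x + y ∈ A')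
    (hA_sub : ∀ x ∈ A, x - y ∈ A') (x : G) :
    |A.indicator (fun _ => c) (x - y) - A.indicator (fun _ => c) x| ≤
      (A' \ A).indicator (fun _ => c) x + (A' \ A).indicator (fun _ => c) (x - y) := by
  by_cases h₁ : x - y ∈ A <;> by_cases h₂ : x ∈ A
  · simp [h₁, h₂]
  · have hx : x ∈ A' \ A := ⟨by simpa using hA_add _ h₁, h₂⟩
    simp [h₁, h₂, hx, abs_of_nonneg hc]
  · have hx : x - y ∈ A' \ A := ⟨hA_sub _ h₂, h₁⟩
    simp [h₁, h₂, hx, abs_of_nonneg hc]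
  · simpa [h₁, h₂] using
      add_nonneg (Set.indicator_nonneg (fun _ _ => hc) x) (Set.indicator_nonneg (fun _ _ => hc) _)

variable [Fintype G]

lemma sum_abs_indicator_translate_sub_le {c : ℝ} (hc : 0 ≤ c) (hAA' : A ⊆ A')
    (hA_add : ∀ x ∈ A, x + y ∈ A') (hA_sub : ∀ x ∈ A, x - y ∈ A') :
    ∑ x, |A.indicator (fun _ => c) (x - y) - A.indicator (fun _ => c) x| ≤
      2 * c * (Nat.card A' - Nat.card A) :=
  calc ∑ x, |A.indicator (fun _ => c) (x - y) - A.indicator (fun _ => c) x|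
      ≤ ∑ x, ((A' \ A).indicator (fun _ => c) x + (A' \ A).indicator (fun _ => c) (x - y)) :=
        Finset.sum_le_sum fun x _ => abs_indicator_translate_sub_le hc hA_add hA_sub x
    _ = 2 * ∑ x, (A' \ A).indicator (fun _ => c) x := by
        rw [Finset.sum_add_distrib, two_mul]
        congr 1
        exact Fintype.sum_equiv (Equiv.subRight y) _ _ fun _ => rfl
    _ = 2 * c * (Nat.card A' - Nat.card A) := by
        simp only [Set.indicator_sdiff hAA', Pi.sub_apply, Finset.sum_sub_distrib,
          sum_indicator_const]
        ring

lemma L1Norm_muFn_translate_sub_le (hA : A.Nonempty) (hAA' : A ⊆ A')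
    (hA_add : ∀ x ∈ A, x + y ∈ A') (hA_sub : ∀ x ∈ A, x - y ∈ A') :
    L1Norm (fun x => muFn A (x - y) - muFn A x) ≤ 2 * (Nat.card A' / Nat.card A - 1) := by
  have hN : (0 : ℝ) < Fintype.card G := by exact_mod_cast Fintype.card_pos
  have hn : (0 : ℝ) < Nat.card A := by
    have := hA.to_subtype
    exact_mod_cast Nat.card_pos
  calc L1Norm (fun x => muFn A (x - y) - muFn A x)
      ≤ (Fintype.card G : ℝ)⁻¹ *
          (2 * (Fintype.card G / Nat.card A) * (Nat.card A' - Nat.card A)) :=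
        mul_le_mul_of_nonneg_left
          (sum_abs_indicator_translate_sub_le (by positivity) hAA' hA_add hA_sub) (by positivity)
    _ = 2 * (Nat.card A' / Nat.card A - 1) := by field_simp

end Translate

lemma IsBourgainSystem.L1Norm_translate_muFn_sub_le {G : Type u} [AddCommGroup G] [Fintype G]
    {B : ℝ → Set G} {d ρ : ℝ} (hB : IsBourgainSystem B d) (hreg : IsRegularBS B d)
    (hρ0 : 0 < ρ) (hρ : ρ ≤ 1 / (32 * d)) {y : G} (hy : y ∈ B ρ) :
    L1Norm (fun x => muFn (B 1) (x - y) - muFn (B 1) x) ≤ 64 * ρ * d := by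
  obtain ⟨hzero, hneg, hmono, hadd, -⟩ := hB
  have hy' : -y ∈ B ρ := by rw [← hneg ρ hρ0]; exact Set.neg_mem_neg.mpr hy
  have hratio := (hreg ρ (by rwa [abs_of_pos hρ0])).2
  rw [abs_of_pos hρ0] at hratio
  calc L1Norm (fun x => muFn (B 1) (x - y) - muFn (B 1) x)
      ≤ 2 * (Nat.card (B (1 + ρ)) / Nat.card (B 1) - 1) :=
        L1Norm_muFn_translate_sub_le ⟨0, hzero 1 one_pos⟩ (hmono 1 (1 + ρ) one_pos (by linarith))
          (fun x hx => hadd 1 ρ one_pos hρ0 (Set.add_mem_add hx hy))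
          (fun x hx => sub_eq_add_neg x y ▸ hadd 1 ρ one_pos hρ0 (Set.add_mem_add hx hy'))
    _ ≤ 64 * ρ * d := by linarith

theorem statement9 {G : Type u} [AddCommGroup G] [Fintype G] (B : ℝ → Set G) (d : ℝ)
    (hB : IsBourgainSystem B d) (hreg : IsRegularBS B d)
    (μ : G → ℝ) (hμ0 : ∀ x, 0 ≤ μ x) (hμ1 : gavg μ = 1)
    (ρ : ℝ) (hρ0 : 0 < ρ) (hρ1 : ρ ≤ 1 / (64 * d))
    (hsupp : ∀ x, μ x ≠ 0 → x ∈ B ρ) :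
    L1Norm (fun x => conv (muFn (B 1)) μ x - muFn (B 1) x) ≤ 64 * ρ * d := by
  have hd : 0 < d := by
    have := hρ0.trans_le hρ1
    rw [one_div_pos] at this
    linarith
  have hρ' : ρ ≤ 1 / (32 * d) := hρ1.trans (by gcongr; norm_num)
  exact L1Norm_conv_sub_le hμ0 hμ1 fun y hy =>
    hB.L1Norm_translate_muFn_sub_le hreg hρ0 hρ' (hsupp y hy)
end

section
/- There exists an absolute constant c > 0 such that the following holds. Let θ ∈ (0, 1], let G be a finite abelian group, let 𝓑, 𝓑', 𝓑'' be Bourgain systems in G with 𝓑 regular of dimension d, 𝓑' ≤_ρ 𝓑 and 𝓑'' ≤_ρ 𝓑 where ρ ≤ cθα/d, and let A ⊆ B be of relative density α = |A|/|B| > 0. Then either max(‖1_A ∗ μ_{B'}‖_∞, ‖1_A ∗ μ_{B''}‖_∞) ≥ (1 + θ/2)·α, or there exists x ∈ G such that (1_A ∗ μ_{B'})(x) ≥ (1 − θ)·α and (1_A ∗ μ_{B''})(x) ≥ (1 − θ)·α. -/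
open Pointwise

universe u

/-- The indicator function `1_A`. -/
noncomputable def ind {G : Type u} [AddCommGroup G] (A : Set G) : G → ℝ :=
  A.indicator fun _ => (1 : ℝ)

lemma sum_ind {G : Type u} [AddCommGroup G] [Fintype G] (A : Set G) :
    ∑ x, ind A x = (Nat.card A : ℝ) := by
  classical
  simp [ind, Set.indicator_apply, Finset.sum_boole]

lemma sum_muFn {G : Type u} [AddCommGroup G] [Fintype G] (T : Set G) (hT : T.Nonempty) :
    ∑ x, muFn T x = (Fintype.card G : ℝ) := by
  classical
  have h1 : (Nat.card T : ℝ) ≠ 0 := by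
    have : Nat.card T ≠ 0 := Nat.card_ne_zero.mpr ⟨hT.to_subtype, Set.toFinite T⟩
    exact_mod_cast this
  have hfe : Finset.filter (Membership.mem T) Finset.univ = T.toFinset := by
    ext x; simp [Set.mem_toFinset]
  simp only [muFn, Set.indicator_apply, ← Set.mem_toFinset]
  rw [Finset.sum_ite_mem, Finset.univ_inter, Finset.sum_const, nsmul_eq_mul,
    Set.toFinset_card, ← Nat.card_eq_fintype_card]
  field_simp

lemma sum_conv {G : Type u} [AddCommGroup G] [Fintype G] (f g : G → ℝ) :
    ∑ x, conv f g x = (Fintype.card G : ℝ)⁻¹ * (∑ y, f y) * (∑ z, g z) := by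
  unfold conv
  rw [← Finset.mul_sum, Finset.sum_comm]
  have h : ∀ y : G, ∑ x, f y * g (x - y) = f y * ∑ z, g z := by
    intro y
    rw [← Finset.mul_sum]
    congr 1
    exact (Equiv.sum_comp (Equiv.subRight y) g)
  simp_rw [h]
  rw [← Finset.sum_mul]
  ring

lemma conv_eq_zero {G : Type u} [AddCommGroup G] [Fintype G] {A T S : Set G} {x : G}
    (h : ∀ y, y ∈ A → x - y ∈ T → x ∈ S) (hx : x ∉ S) :
    conv (ind A) (muFn T) x = 0 := by
  unfold conv
  rw [Finset.sum_eq_zero, mul_zero]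
  intro y _
  by_cases hy : y ∈ A
  · rw [muFn, Set.indicator_of_notMem (fun hm => hx (h y hy hm)), mul_zero]
  · rw [ind, Set.indicator_of_notMem hy, zero_mul]

set_option maxHeartbeats 1000000 in
theorem statement13 :
    ∃ c : ℝ, 0 < c ∧
      ∀ (G : Type u) [AddCommGroup G] [Fintype G] (θ : ℝ), 0 < θ → θ ≤ 1 →
        ∀ (B B' B'' : ℝ → Set G) (d d' d'' ρ : ℝ),
        IsBourgainSystem B d → IsRegularBS B d →
        IsBourgainSystem B' d' → IsBourgainSystem B'' d'' →
        (∀ σ : ℝ, 0 < σ → B' σ ⊆ B (ρ * σ)) →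
        (∀ σ : ℝ, 0 < σ → B'' σ ⊆ B (ρ * σ)) →
        ∀ A : Set G, A.Nonempty → A ⊆ B 1 →
        ∀ α : ℝ, α = (Nat.card A : ℝ) / (Nat.card (B 1) : ℝ) →
        0 < ρ → ρ ≤ c * θ * α / d →
        ((1 + θ / 2) * α ≤
            max (⨆ x, |conv (ind A) (muFn (B' 1)) x|) (⨆ x, |conv (ind A) (muFn (B'' 1)) x|) ∨
          ∃ x : G, (1 - θ) * α ≤ conv (ind A) (muFn (B' 1)) x ∧
            (1 - θ) * α ≤ conv (ind A) (muFn (B'' 1)) x) := by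
  classical
  refine ⟨1/256, by norm_num, ?_⟩
  intro G _ _ θ hθ hθ1 B B' B'' d d' d'' ρ hB hreg hB' hB'' hsub' hsub'' A hAne hAB α hα hρ hρle
  by_contra hcon
  push_neg at hcon
  obtain ⟨h1, h2⟩ := hcon
  set f := conv (ind A) (muFn (B' 1)) with hf
  set g := conv (ind A) (muFn (B'' 1)) with hg
  -- basic positivity facts
  have hB1ne : (B 1).Nonempty := ⟨0, hB.1 1 one_pos⟩
  have hcardB : (0:ℝ) < Nat.card (B 1) := by
    have : Nat.card (B 1) ≠ 0 := Nat.card_ne_zero.mpr ⟨hB1ne.to_subtype, Set.toFinite _⟩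
    positivity
  have hcardA : (0:ℝ) < Nat.card A := by
    have : Nat.card A ≠ 0 := Nat.card_ne_zero.mpr ⟨hAne.to_subtype, Set.toFinite _⟩
    positivity
  have hαpos : 0 < α := by rw [hα]; positivity
  have hAle : (Nat.card A : ℝ) ≤ Nat.card (B 1) := by
    exact_mod_cast Nat.card_mono (Set.toFinite _) hAB
  have hα1 : α ≤ 1 := by rw [hα]; exact div_le_one_of_le₀ hAle hcardB.le
  have hd : 0 < d := by
    by_contra hd
    push_neg at hd
    rcases lt_or_eq_of_le hd with hd | hd
    · have : 1/256 * θ * α / d < 0 := div_neg_of_pos_of_neg (by positivity) hd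
      linarith
    · rw [hd] at hρle; simp at hρle; linarith
  have hρd : ρ * d ≤ θ * α / 256 := by
    rw [le_div_iff₀ hd] at hρle
    nlinarith
  -- regularity bound at ρ
  have hρ32 : |ρ| ≤ 1 / (32 * d) := by
    rw [abs_of_pos hρ]
    rw [le_div_iff₀ hd] at hρle
    rw [le_div_iff₀ (by positivity : (0:ℝ) < 32 * d)]
    nlinarith
  have hregρ := (hreg ρ hρ32).2
  rw [abs_of_pos hρ] at hregρ
  have hScard : (Nat.card (B (1+ρ)) : ℝ) ≤ (1 + 32 * ρ * d) * Nat.card (B 1) := by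
    rw [div_le_iff₀ hcardB] at hregρ
    linarith
  -- supports
  have hsupp : ∀ x : G, x ∉ B (1 + ρ) → f x = 0 ∧ g x = 0 := by
    intro x hx
    have key : ∀ (T : ℝ → Set G), T 1 ⊆ B ρ →
        conv (ind A) (muFn (T 1)) x = 0 := by
      intro T hT
      refine conv_eq_zero (fun y hy hm => ?_) hx
      have h1y : y ∈ B 1 := hAB hy
      have h2y : x - y ∈ B ρ := hT hm
      have : y + (x - y) ∈ B (1 + ρ) := hB.2.2.2.1 1 ρ one_pos hρ ⟨y, h1y, x - y, h2y, rfl⟩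
      simpa using this
    constructor
    · exact key B' (by simpa using hsub' 1 one_pos)
    · exact key B'' (by simpa using hsub'' 1 one_pos)
  -- total sums
  have hGne : Nonempty G := ⟨hAne.choose⟩
  have hNpos : (0:ℝ) < Fintype.card G := by exact_mod_cast Fintype.card_pos
  have hsumf : ∑ x, f x = (Nat.card A : ℝ) := by
    rw [hf, sum_conv, sum_ind, sum_muFn _ ⟨0, hB'.1 1 one_pos⟩]
    field_simp
  have hsumg : ∑ x, g x = (Nat.card A : ℝ) := by
    rw [hg, sum_conv, sum_ind, sum_muFn _ ⟨0, hB''.1 1 one_pos⟩]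
    field_simp
  -- pointwise bound
  have hfsup : (⨆ x, |f x|) < (1 + θ/2) * α := lt_of_le_of_lt (le_max_left _ _) h1
  have hgsup : (⨆ x, |g x|) < (1 + θ/2) * α := lt_of_le_of_lt (le_max_right _ _) h1
  have hpt : ∀ x : G, f x + g x < ((1 - θ) + (1 + θ/2)) * α := by
    intro x
    have hfx : f x ≤ ⨆ x, |f x| :=
      le_trans (le_abs_self _)
        (le_ciSup (Set.Finite.bddAbove (Set.finite_range fun x => |f x|)) x)
    have hgx : g x ≤ ⨆ x, |g x| :=
      le_trans (le_abs_self _)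
        (le_ciSup (Set.Finite.bddAbove (Set.finite_range fun x => |g x|)) x)
    by_cases hc : (1 - θ) * α ≤ f x
    · have := h2 x hc
      nlinarith
    · push_neg at hc
      nlinarith
  -- sum over the support
  set S := (B (1 + ρ)).toFinset with hS
  have hSne : S.Nonempty := ⟨0, by rw [hS, Set.mem_toFinset]; exact hB.1 _ (by linarith)⟩
  have hsum_eq : ∑ x ∈ S, (f x + g x) = ∑ x, (f x + g x) := by
    refine Finset.sum_subset (Finset.subset_univ S) ?_
    intro x _ hx
    have hx' : x ∉ B (1 + ρ) := by rwa [hS, Set.mem_toFinset] at hx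
    obtain ⟨e1, e2⟩ := hsupp x hx'
    rw [e1, e2, add_zero]
  have hsum_lt : ∑ x ∈ S, (f x + g x) < S.card * (((1 - θ) + (1 + θ/2)) * α) := by
    have h := Finset.sum_lt_sum_of_nonempty hSne (fun x (_ : x ∈ S) => hpt x)
    rwa [Finset.sum_const, nsmul_eq_mul] at h
  have hScard2 : (S.card : ℝ) = Nat.card (B (1 + ρ)) := by
    rw [hS, Set.toFinset_card, ← Nat.card_eq_fintype_card]
  have htot : (2 : ℝ) * Nat.card A < S.card * (((1 - θ) + (1 + θ/2)) * α) := by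
    have : ∑ x, (f x + g x) = 2 * Nat.card A := by
      rw [Finset.sum_add_distrib, hsumf, hsumg]; ring
    rw [hsum_eq, this] at hsum_lt
    exact hsum_lt
  have hαB : α * Nat.card (B 1) = Nat.card A := by
    rw [hα, div_mul_cancel₀ _ (ne_of_gt hcardB)]
  -- final contradiction
  have hfinal : (2 : ℝ) * Nat.card A <
      (1 + 32 * ρ * d) * Nat.card (B 1) * (((1 - θ) + (1 + θ/2)) * α) := by
    refine lt_of_lt_of_le htot (mul_le_mul_of_nonneg_right ?_
      (mul_nonneg (by linarith) hαpos.le))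
    rw [hScard2]
    exact hScard
  rw [← hαB] at hfinal
  have hsc : (1 + 32 * ρ * d) * ((1 - θ) + (1 + θ/2)) ≤ 2 - θ/4 := by
    nlinarith [hρd, mul_pos hρ hd, hθ, hα1, hαpos]
  have hre : (1 + 32 * ρ * d) * (Nat.card (B 1) : ℝ) * (((1 - θ) + (1 + θ/2)) * α)
      = ((1 + 32 * ρ * d) * ((1 - θ) + (1 + θ/2))) * (α * (Nat.card (B 1) : ℝ)) := by
    ring
  rw [hre] at hfinal
  have hP : (0:ℝ) < α * (Nat.card (B 1) : ℝ) := mul_pos hαpos hcardB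
  nlinarith [mul_le_mul_of_nonneg_right hsc hP.le, mul_pos (by linarith : (0:ℝ) < θ/4) hP]
end

section
/- Let p ≥ 2 and K ≥ 1 be real parameters, let G be a finite abelian group, and let A be a nonempty subset of G with |A + A| ≤ K|A|. Then μ_G(A + A)^{1/p} ≤ K^{1/2} · ‖1_A ∗ μ_A‖_{L^{p/2}}^{1/2}, and ‖1_A ∗ μ_A‖_{L^{p/2}}^{1/2} ≤ K^{1/2} · ‖1_A ∗ μ_A‖_{L^p}. -/
open Pointwise

universe u

/-- The `L^p` norm `‖f‖_{L^p} = (E_G |f|^p)^{1/p}`. -/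
noncomputable def LpNorm {G : Type u} [AddCommGroup G] [Fintype G] (f : G → ℝ) (p : ℝ) : ℝ :=
  (gavg fun x => |f x| ^ p) ^ (1 / p)

/-!
The function `f = 1_A ∗ μ_A` is nonnegative, has mean `μ_G(A)` and is supported on `S = A + A`.
Hölder's inequality against `1_S` gives `‖f‖_{L^1} ≤ μ_G(S)^{1 - 2/p} ‖f‖_{L^{p/2}}` and
`‖f‖_{L^{p/2}} ≤ μ_G(S)^{1/p} ‖f‖_{L^p}`. Since `μ_G(S) ≤ K μ_G(A) = K ‖f‖_{L^1}`, the first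
yields `μ_G(S)^{2/p} ≤ K ‖f‖_{L^{p/2}}`, and inserting this into the second yields
`‖f‖_{L^{p/2}} ≤ K^{1/2} ‖f‖_{L^{p/2}}^{1/2} ‖f‖_{L^p}`.
-/

lemma sum_abs_rpow_rpow_le_of_support {ι : Type*} [Fintype ι] (f : ι → ℝ) (S : Finset ι)
    (hf : ∀ x ∉ S, f x = 0) {r t : ℝ} (hr : 0 < r) (hrt : r ≤ t) :
    (∑ x, |f x| ^ r) ^ (t / r) ≤ (S.card : ℝ) ^ (t / r - 1) * ∑ x, |f x| ^ t := by
  have hsupp : ∀ {e : ℝ}, 0 < e → ∑ x ∈ S, |f x| ^ e = ∑ x, |f x| ^ e := fun he =>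
    Finset.sum_subset (Finset.subset_univ _) fun x _ hx => by
      rw [hf x hx, abs_zero, Real.zero_rpow he.ne']
  have h := Real.rpow_sum_le_const_mul_sum_rpow_of_nonneg S (f := fun x => |f x| ^ r)
    ((one_le_div hr).2 hrt) fun _ _ => by positivity
  simp only [← Real.rpow_mul (abs_nonneg _), mul_div_cancel₀ _ hr.ne'] at h
  rwa [hsupp hr, hsupp (hr.trans_le hrt)] at h

section FiniteAbelianGroup

variable {G : Type u} [AddCommGroup G] [Fintype G]

lemma card_pos_real : (0 : ℝ) < Fintype.card G := by
  exact_mod_cast Fintype.card_pos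

lemma conv_nonneg {f g : G → ℝ} (hf : 0 ≤ f) (hg : 0 ≤ g) : 0 ≤ conv f g := fun x =>
  mul_nonneg (by positivity) (Finset.sum_nonneg fun y _ => mul_nonneg (hf y) (hg (x - y)))

lemma conv_eq_zero_of_notMem_add [DecidableEq G] {f g : G → ℝ} {A B : Finset G}
    (hf : ∀ x ∉ A, f x = 0) (hg : ∀ x ∉ B, g x = 0) {x : G} (hx : x ∉ A + B) :
    conv f g x = 0 := by
  refine mul_eq_zero_of_right _ (Finset.sum_eq_zero fun y _ => ?_)
  by_cases hy : y ∈ A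
  · have : x - y ∉ B := fun h => hx (by simpa using Finset.add_mem_add hy h)
    rw [hg _ this, mul_zero]
  · rw [hf _ hy, zero_mul]

lemma gavg_conv (f g : G → ℝ) : gavg (conv f g) = gavg f * gavg g := by
  have hshift : ∀ y, ∑ x, g (x - y) = ∑ x, g x := fun y =>
    Fintype.sum_equiv (Equiv.subRight y) _ _ fun _ => rfl
  simp only [gavg, conv, ← Finset.mul_sum]
  rw [Finset.sum_comm]
  simp only [← Finset.mul_sum, hshift, ← Finset.sum_mul]
  ring

lemma gavg_ind [DecidableEq G] (A : Finset G) :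
    gavg (ind (A : Set G)) = A.card / Fintype.card G := by
  simp [gavg, ind, Set.indicator_apply, inv_mul_eq_div]

lemma gavg_muFn [DecidableEq G] {A : Finset G} (hA : A.Nonempty) :
    gavg (muFn (A : Set G)) = 1 := by
  have : (0 : ℝ) < A.card := by exact_mod_cast hA.card_pos
  have : (0 : ℝ) < Fintype.card G := card_pos_real
  simp [gavg, muFn, Set.indicator_apply]
  field_simp

lemma LpNorm_one_of_nonneg {f : G → ℝ} (hf : 0 ≤ f) : LpNorm f 1 = gavg f := by
  simp [LpNorm, abs_of_nonneg (hf _)]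

lemma LpNorm_le_of_support (f : G → ℝ) (S : Finset G) (hf : ∀ x ∉ S, f x = 0)
    {r t : ℝ} (hr : 0 < r) (hrt : r ≤ t) :
    LpNorm f r ≤ ((S.card : ℝ) / Fintype.card G) ^ (1 / r - 1 / t) * LpNorm f t := by
  have ht : 0 < t := hr.trans_le hrt
  have hn : (0 : ℝ) < Fintype.card G := card_pos_real
  set n : ℝ := (Fintype.card G : ℝ)
  set s : ℝ := (S.card : ℝ)
  set Sr := ∑ x, |f x| ^ r
  set St := ∑ x, |f x| ^ t
  have hSr : 0 ≤ Sr := Finset.sum_nonneg fun _ _ => by positivity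
  have hSt : 0 ≤ St := Finset.sum_nonneg fun _ _ => by positivity
  calc LpNorm f r = ((n⁻¹ * Sr) ^ (t / r)) ^ (1 / t) := by
        rw [LpNorm, gavg, ← Real.rpow_mul (by positivity)]
        congr 1
        field_simp
    _ = (n⁻¹ ^ (t / r) * Sr ^ (t / r)) ^ (1 / t) := by
        rw [Real.mul_rpow (by positivity) hSr]
    _ ≤ (n⁻¹ ^ (t / r) * (s ^ (t / r - 1) * St)) ^ (1 / t) := by
        gcongr
        exact sum_abs_rpow_rpow_le_of_support f S hf hr hrt
    _ = ((s / n) ^ (t / r - 1) * (n⁻¹ * St)) ^ (1 / t) := by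
        congr 1
        have hn' : n⁻¹ ^ (t / r) = n⁻¹ ^ (t / r - 1) * n⁻¹ := by
          rw [Real.rpow_sub_one (inv_ne_zero hn.ne')]
          field_simp
        rw [div_eq_mul_inv s n, Real.mul_rpow (by positivity) (by positivity), hn']
        ring
    _ = (s / n) ^ (1 / r - 1 / t) * LpNorm f t := by
        rw [Real.mul_rpow (by positivity) (by positivity), ← Real.rpow_mul (by positivity),
          LpNorm, gavg]
        congr 2
        field_simp

lemma LpNorm_nonneg (f : G → ℝ) (p : ℝ) :
    0 ≤ LpNorm f p :=
  Real.rpow_nonneg (mul_nonneg (by positivity) (Finset.sum_nonneg fun _ _ => by positivity)) _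

end FiniteAbelianGroup

lemma rpow_one_div_le_sqrt_mul_sqrt {m a K L p : ℝ} (hm : 0 < m) (hK : 0 ≤ K)
    (hmK : m ≤ K * a) (ha : a ≤ m ^ (1 - 2 / p) * L) : m ^ (1 / p) ≤ √K * √L := by
  have hpos : 0 < m ^ (1 - 2 / p) := by positivity
  have hsplit : m = m ^ (1 - 2 / p) * (m ^ (1 / p)) ^ 2 := by
    rw [← Real.rpow_natCast, ← Real.rpow_mul hm.le, ← Real.rpow_add hm]
    ring_nf
    rw [Real.rpow_one]
  have hsq : (m ^ (1 / p)) ^ 2 ≤ K * L := by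
    refine le_of_mul_le_mul_left ?_ hpos
    calc m ^ (1 - 2 / p) * (m ^ (1 / p)) ^ 2 = m := hsplit.symm
      _ ≤ K * (m ^ (1 - 2 / p) * L) := hmK.trans (by gcongr)
      _ = m ^ (1 - 2 / p) * (K * L) := by ring
  calc m ^ (1 / p) = √((m ^ (1 / p)) ^ 2) := (Real.sqrt_sq (by positivity)).symm
    _ ≤ √(K * L) := Real.sqrt_le_sqrt hsq
    _ = √K * √L := Real.sqrt_mul hK L

lemma Real.sqrt_le_of_le_sqrt_mul {x c : ℝ} (hc : 0 ≤ c) (h : x ≤ √x * c) : √x ≤ c := by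
  rcases le_or_gt x 0 with hx | hx
  · rwa [Real.sqrt_eq_zero'.2 hx]
  · refine le_of_mul_le_mul_left ?_ (Real.sqrt_pos.2 hx)
    rwa [Real.mul_self_sqrt hx.le]

theorem statement16 {G : Type u} [AddCommGroup G] [Fintype G] [DecidableEq G]
    (p K : ℝ) (hp : 2 ≤ p) (hK : 1 ≤ K) (A : Finset G) (hA : A.Nonempty)
    (hAA : ((A + A).card : ℝ) ≤ K * (A.card : ℝ)) :
    (((A + A).card : ℝ) / (Fintype.card G : ℝ)) ^ (1 / p)
        ≤ Real.sqrt K * Real.sqrt (LpNorm (conv (ind (A : Set G)) (muFn (A : Set G))) (p / 2)) ∧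
      Real.sqrt (LpNorm (conv (ind (A : Set G)) (muFn (A : Set G))) (p / 2))
        ≤ Real.sqrt K * LpNorm (conv (ind (A : Set G)) (muFn (A : Set G))) p := by
  set f := conv (ind (A : Set G)) (muFn (A : Set G))
  set m : ℝ := ((A + A).card : ℝ) / Fintype.card G
  have hf0 : 0 ≤ f := conv_nonneg (Set.indicator_nonneg fun _ _ => zero_le_one)
    (Set.indicator_nonneg fun _ _ => by positivity)
  have hsupp : ∀ x ∉ A + A, f x = 0 := fun x hx =>
    conv_eq_zero_of_notMem_add (fun y hy => by simp [ind, hy]) (fun y hy => by simp [muFn, hy]) hx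
  have hm : 0 < m := by
    have : 0 < (A + A).card := (hA.add hA).card_pos
    have : (0 : ℝ) < Fintype.card G := card_pos_real
    positivity
  have hmK : m ≤ K * (A.card / Fintype.card G) := by
    rw [mul_div_assoc']
    exact div_le_div_of_nonneg_right hAA (Nat.cast_nonneg _)
  have hL1 : (A.card : ℝ) / Fintype.card G ≤ m ^ (1 - 2 / p) * LpNorm f (p / 2) := by
    have := LpNorm_le_of_support f (A + A) hsupp one_pos (by linarith : 1 ≤ p / 2)
    rwa [LpNorm_one_of_nonneg hf0, gavg_conv, gavg_ind, gavg_muFn hA, mul_one, one_div_one,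
      one_div_div] at this
  have hfirst := rpow_one_div_le_sqrt_mul_sqrt hm (by linarith) hmK hL1
  refine ⟨hfirst, Real.sqrt_le_of_le_sqrt_mul
    (mul_nonneg (Real.sqrt_nonneg K) (LpNorm_nonneg f p)) ?_⟩
  have hexp : 1 / (p / 2) - 1 / p = 1 / p := by
    field_simp
    ring
  calc LpNorm f (p / 2) ≤ m ^ (1 / p) * LpNorm f p := by
        simpa only [hexp] using
          LpNorm_le_of_support f (A + A) hsupp (by linarith) (by linarith : p / 2 ≤ p)
    _ ≤ √K * √(LpNorm f (p / 2)) * LpNorm f p := by gcongr; exact LpNorm_nonneg f p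
    _ = √(LpNorm f (p / 2)) * (√K * LpNorm f p) := by ring
end
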